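/- Let 0 < α < 1, ρ > 0, a > 0, λ ∈ ℂ, c ∈ ℂ, and let h be a continuous function on [a, ∞). Define the successive approximations u₀(t) = c and u_{n+1}(t) = c + λ · I_{a+}^{α,ρ} u_n(t) + I_{a+}^{α,ρ} h(t) for n ≥ 0. Then for every n ≥ 1 and every t ≥ a, u_n(t) = c · ∑_{k=0}^{n} (λ^k / Γ(kα + 1)) ((t^ρ - a^ρ)/ρ)^{kα} + ∫_a^t ((t^ρ - s^ρ)/ρ)^{α-1} s^{ρ-1} ( ∑_{k=0}^{n-1} (λ^k / Γ(αk + α)) ((t^ρ - s^ρ)/ρ)^{αk} ) h(s) ds. -/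

import Mathlib

/-!
The substitution `v = s ^ ρ` turns `I_{a+}^{α,ρ}` into `ρ^(-α) J^α`, where `J^β` is the
Riemann–Liouville integral from `A = a ^ ρ`. By a Beta integral, `J^α` sends
`(v - A)^(kα) / Γ(kα + 1)` to the same expression with `k + 1`, and by Fubini on the triangle
`A < w < v < T` it satisfies `J^α J^β = J^(α + β)`. Writing `u_n(s) = U_n(s ^ ρ)` and
`h(s) = g(s ^ ρ)`, the recursion becomes `U_{n+1} = c + λ ρ^(-α) J^α U_n + J^α (ρ^(-α) g)`,
which the closed form solves term by term; undoing the substitution gives the stated integral.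
-/

open Real Set MeasureTheory

/-- The Katugampola fractional integral of a complex-valued function:
`I_{a+}^{α,ρ} u(t) = (ρ^{1-α}/Γ(α)) ∫_a^t s^{ρ-1} u(s) / (t^ρ - s^ρ)^{1-α} ds`. -/
noncomputable def katugampolaIntegralC (α ρ a : ℝ) (u : ℝ → ℂ) (t : ℝ) : ℂ :=
  ((ρ ^ (1 - α) / Real.Gamma α : ℝ) : ℂ) *
    ∫ s in a..t, ((s ^ (ρ - 1) : ℝ) : ℂ) * u s / (((t ^ ρ - s ^ ρ) ^ (1 - α) : ℝ) : ℂ)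

section FractionalIntegrals

variable {E : Type*} [NormedAddCommGroup E] [NormedSpace ℝ E]

theorem integrableOn_sub_rpow {A T r : ℝ} (hr : -1 < r) :
    IntegrableOn (fun v => (T - v) ^ r) (Ioo A T) := by
  have h := (intervalIntegral.intervalIntegrable_rpow' (a := 0) (b := T - A) hr).comp_sub_left T
  rw [sub_zero, sub_sub_cancel] at h
  exact h.symm.1.mono_set Ioo_subset_Ioc_self

theorem integral_sub_rpow {A T r : ℝ} (hr : -1 < r) (hAT : A ≤ T) :
    ∫ v in Ioo A T, (T - v) ^ r = (T - A) ^ (r + 1) / (r + 1) := by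
  rw [← integral_Ioc_eq_integral_Ioo, ← intervalIntegral.integral_of_le hAT,
    intervalIntegral.integral_comp_sub_left (fun x => x ^ r), sub_self, integral_rpow (.inl hr),
    zero_rpow (by linarith), sub_zero]

theorem integral_rpow_mul_one_sub_rpow {p q : ℝ} (hp : 0 < p) (hq : 0 < q) :
    ∫ x in (0 : ℝ)..1, x ^ (p - 1) * (1 - x) ^ (q - 1) = Gamma p * Gamma q / Gamma (p + q) := by
  have hB : Complex.betaIntegral p q
      = ((∫ x in (0 : ℝ)..1, x ^ (p - 1) * (1 - x) ^ (q - 1) : ℝ) : ℂ) := by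
    rw [Complex.betaIntegral, ← intervalIntegral.integral_ofReal]
    refine intervalIntegral.integral_congr fun x hx => ?_
    rw [uIcc_of_le zero_le_one] at hx
    simp only [Complex.ofReal_mul, Complex.ofReal_cpow hx.1,
      Complex.ofReal_cpow (sub_nonneg.2 hx.2)]
    push_cast
    ring_nf
  have hΓ := Complex.Gamma_mul_Gamma_eq_betaIntegral (s := p) (t := q) (by simpa) (by simpa)
  rw [hB, ← Complex.ofReal_add, Complex.Gamma_ofReal, Complex.Gamma_ofReal, Complex.Gamma_ofReal]
    at hΓ
  rw [eq_div_iff (Gamma_pos_of_pos (add_pos hp hq)).ne', mul_comm]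
  exact_mod_cast hΓ.symm

theorem integral_sub_rpow_mul_rpow_sub {A T p q : ℝ} (hAT : A < T) (hp : 0 < p) (hq : 0 < q) :
    ∫ v in Ioo A T, (T - v) ^ (p - 1) * (v - A) ^ (q - 1)
      = Gamma p * Gamma q / Gamma (p + q) * (T - A) ^ (p + q - 1) := by
  have hTA : 0 < T - A := sub_pos.2 hAT
  have hsub := intervalIntegral.integral_comp_mul_add
    (fun v => (T - v) ^ (p - 1) * (v - A) ^ (q - 1)) hTA.ne' A (a := 0) (b := 1)
  rw [mul_zero, zero_add, mul_one, sub_add_cancel] at hsub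
  have hscale : ∀ x ∈ uIcc (0 : ℝ) 1,
      (T - ((T - A) * x + A)) ^ (p - 1) * ((T - A) * x + A - A) ^ (q - 1)
        = (T - A) ^ (p - 1) * (T - A) ^ (q - 1) * (x ^ (q - 1) * (1 - x) ^ (p - 1)) := by
    intro x hx
    rw [uIcc_of_le zero_le_one] at hx
    rw [show T - ((T - A) * x + A) = (T - A) * (1 - x) by ring, add_sub_cancel_right,
      mul_rpow hTA.le (sub_nonneg.2 hx.2), mul_rpow hTA.le hx.1]
    ring
  rw [intervalIntegral.integral_congr hscale, intervalIntegral.integral_const_mul,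
    integral_rpow_mul_one_sub_rpow hq hp, smul_eq_mul, eq_inv_mul_iff_mul_eq₀ hTA.ne'] at hsub
  rw [← integral_Ioc_eq_integral_Ioo, ← intervalIntegral.integral_of_le hAT.le, ← hsub,
    show p + q - 1 = (p - 1) + (q - 1) + 1 by ring, rpow_add_one hTA.ne', rpow_add hTA,
    add_comm q p]
  ring

theorem integrableOn_sub_rpow_smul {A T r : ℝ} (hr : -1 < r) {f : ℝ → E}
    (hf : ContinuousOn f (Icc A T)) :
    IntegrableOn (fun v => (T - v) ^ r • f v) (Ioo A T) := by
  obtain ⟨C, hC⟩ := isCompact_Icc.exists_bound_of_continuousOn hf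
  refine (integrableOn_sub_rpow hr).smul_bdd C
    ((hf.mono Ioo_subset_Icc_self).aestronglyMeasurable measurableSet_Ioo) ?_
  exact (ae_restrict_iff' measurableSet_Ioo).mpr
    (.of_forall fun v hv => hC v (Ioo_subset_Icc_self hv))

/-- The Riemann–Liouville integral `J^β f (T) = Γ(β)⁻¹ ∫_A^T (T - v)^(β-1) f(v) dv`, taken over
`Ioo A T`, so that it vanishes for `T ≤ A`. -/
noncomputable def rlIntegral (β A : ℝ) (f : ℝ → E) (T : ℝ) : E :=
  (Gamma β)⁻¹ • ∫ v in Ioo A T, (T - v) ^ (β - 1) • f v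

theorem rlIntegral_ofReal (β A : ℝ) (f : ℝ → ℝ) (T : ℝ) :
    rlIntegral β A (fun v => (f v : ℂ)) T = ((rlIntegral β A f T : ℝ) : ℂ) := by
  simp only [rlIntegral, Complex.real_smul, smul_eq_mul, ← Complex.ofReal_mul,
    integral_complex_ofReal]

theorem rlIntegral_const_mul (β A : ℝ) (c : ℂ) (f : ℝ → ℂ) (T : ℝ) :
    rlIntegral β A (fun v => c * f v) T = c * rlIntegral β A f T := by
  simp only [rlIntegral, Complex.real_smul, mul_left_comm _ c, integral_const_mul]

theorem rlIntegral_add {β A T : ℝ} {f g : ℝ → E}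
    (hf : IntegrableOn (fun v => (T - v) ^ (β - 1) • f v) (Ioo A T))
    (hg : IntegrableOn (fun v => (T - v) ^ (β - 1) • g v) (Ioo A T)) :
    rlIntegral β A (fun v => f v + g v) T = rlIntegral β A f T + rlIntegral β A g T := by
  simp only [rlIntegral, smul_add, integral_add hf hg]

theorem rlIntegral_finsetSum {ι : Type*} {β A T : ℝ} (s : Finset ι) {f : ι → ℝ → E}
    (hf : ∀ i ∈ s, IntegrableOn (fun v => (T - v) ^ (β - 1) • f i v) (Ioo A T)) :
    rlIntegral β A (fun v => ∑ i ∈ s, f i v) T = ∑ i ∈ s, rlIntegral β A (f i) T := by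
  simp only [rlIntegral, Finset.smul_sum, integral_finsetSum s hf]

theorem integrableOn_sub_rpow_smul_const_mul {A T r : ℝ} (c : ℂ) {f : ℝ → ℂ}
    (hf : IntegrableOn (fun v => (T - v) ^ r • f v) (Ioo A T)) :
    IntegrableOn (fun v => (T - v) ^ r • (c * f v)) (Ioo A T) := by
  simpa only [IntegrableOn, Complex.real_smul, mul_left_comm] using hf.const_mul c

theorem integrableOn_sub_rpow_smul_sum_mul {ι : Type*} {A T r : ℝ} (s : Finset ι) (c : ι → ℂ)
    {f : ι → ℝ → ℂ} (hf : ∀ i ∈ s, IntegrableOn (fun v => (T - v) ^ r • f i v) (Ioo A T)) :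
    IntegrableOn (fun v => (T - v) ^ r • ∑ i ∈ s, c i * f i v) (Ioo A T) := by
  simpa only [IntegrableOn, Finset.smul_sum] using
    integrable_finsetSum s fun i hi => integrableOn_sub_rpow_smul_const_mul (c i) (hf i hi)

theorem rlIntegral_sum_mul {ι : Type*} {β A T : ℝ} (s : Finset ι) (c : ι → ℂ) {f : ι → ℝ → ℂ}
    (hf : ∀ i ∈ s, IntegrableOn (fun v => (T - v) ^ (β - 1) • f i v) (Ioo A T)) :
    rlIntegral β A (fun v => ∑ i ∈ s, c i * f i v) T = ∑ i ∈ s, c i * rlIntegral β A (f i) T := by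
  simp only [rlIntegral_const_mul,
    rlIntegral_finsetSum s fun i hi => integrableOn_sub_rpow_smul_const_mul (c i) (hf i hi)]

theorem rlIntegral_rpow_sub {β γ A T : ℝ} (hβ : 0 < β) (hγ : 0 ≤ γ) (hAT : A ≤ T) :
    rlIntegral β A (fun v => (v - A) ^ γ / Gamma (γ + 1)) T
      = (T - A) ^ (β + γ) / Gamma (β + γ + 1) := by
  rcases hAT.eq_or_lt with rfl | hAT
  · simp [rlIntegral, zero_rpow (by positivity : β + γ ≠ 0)]
  have hΓ : ∀ {x : ℝ}, 0 < x → Gamma x ≠ 0 := fun hx => (Gamma_pos_of_pos hx).ne'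
  have hβγ := integral_sub_rpow_mul_rpow_sub hAT hβ (by positivity : 0 < γ + 1)
  simp only [add_sub_cancel_right, ← add_assoc] at hβγ
  simp only [rlIntegral, smul_eq_mul, mul_div_assoc', integral_div, hβγ]
  field_simp [hΓ hβ, hΓ (by positivity : 0 < γ + 1), hΓ (by positivity : 0 < β + γ + 1)]

/-- The integrand of the iterated integral `J^β (J^γ f) (T)`, extended by zero off the triangle
`w < v`. -/
noncomputable def rlCompKernel (β γ T v w : ℝ) : ℝ :=
  if w < v then (T - v) ^ (β - 1) * (v - w) ^ (γ - 1) else 0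

theorem rlCompKernel_nonneg {β γ T v : ℝ} (hvT : v ≤ T) (w : ℝ) : 0 ≤ rlCompKernel β γ T v w := by
  unfold rlCompKernel
  split_ifs with hw
  · exact mul_nonneg (rpow_nonneg (sub_nonneg.2 hvT) _) (rpow_nonneg (sub_nonneg.2 hw.le) _)
  · exact le_rfl

theorem rlCompKernel_smul_eq_indicator_Iio (β γ T v : ℝ) (f : ℝ → E) :
    (fun w => rlCompKernel β γ T v w • f w)
      = (Iio v).indicator fun w => (T - v) ^ (β - 1) • (v - w) ^ (γ - 1) • f w := by
  ext w
  by_cases hw : w < v <;> simp [rlCompKernel, hw, mul_smul]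

theorem rlCompKernel_smul_eq_indicator_Ioi (β γ T w : ℝ) (x : E) :
    (fun v => rlCompKernel β γ T v w • x)
      = (Ioi w).indicator fun v => ((T - v) ^ (β - 1) * (v - w) ^ (γ - 1)) • x := by
  ext v
  by_cases hw : w < v <;> simp [rlCompKernel, hw]

theorem setIntegral_rlCompKernel_smul_left {β γ A T v : ℝ} (hvT : v ≤ T) (f : ℝ → E) :
    ∫ w in Ioo A T, rlCompKernel β γ T v w • f w
      = (T - v) ^ (β - 1) • ∫ w in Ioo A v, (v - w) ^ (γ - 1) • f w := by
  rw [rlCompKernel_smul_eq_indicator_Iio, setIntegral_indicator measurableSet_Iio,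
    Ioo_inter_Iio, min_eq_right hvT, integral_smul]

theorem setIntegral_rlCompKernel_smul_right [CompleteSpace E] {β γ A T w : ℝ} (hβ : 0 < β)
    (hγ : 0 < γ) (hw : w ∈ Ioo A T) (x : E) :
    ∫ v in Ioo A T, rlCompKernel β γ T v w • x
      = (Gamma β * Gamma γ / Gamma (β + γ) * (T - w) ^ (β + γ - 1)) • x := by
  have hIoo : Ioo A T ∩ Ioi w = Ioo w T := by
    ext v; simp only [mem_inter_iff, mem_Ioo, mem_Ioi]; grind [hw.1]
  rw [rlCompKernel_smul_eq_indicator_Ioi, setIntegral_indicator measurableSet_Ioi, hIoo,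
    integral_smul_const, integral_sub_rpow_mul_rpow_sub hw.2 hβ hγ]

theorem integrable_rlCompKernel {β γ A T : ℝ} (hβ : 0 < β) (hγ : 0 < γ) :
    Integrable (Function.uncurry (rlCompKernel β γ T))
      ((volume.restrict (Ioo A T)).prod (volume.restrict (Ioo A T))) := by
  have hmeas : Measurable (Function.uncurry (rlCompKernel β γ T)) :=
    Measurable.ite (measurableSet_lt measurable_snd measurable_fst) (by fun_prop) measurable_const
  refine (integrable_prod_iff hmeas.aestronglyMeasurable).2 ⟨?_, ?_⟩
  · refine (ae_restrict_iff' measurableSet_Ioo).2 (.of_forall fun v hv => ?_)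
    have hsec := rlCompKernel_smul_eq_indicator_Iio β γ T v (fun _ => (1 : ℝ))
    simp only [smul_eq_mul, mul_one] at hsec
    simp only [Function.uncurry_apply_pair]
    rw [hsec, integrable_indicator_iff measurableSet_Iio, IntegrableOn,
      Measure.restrict_restrict measurableSet_Iio, Iio_inter_Ioo, min_eq_left hv.2.le]
    exact (integrableOn_sub_rpow (by linarith)).const_mul _
  · have hsec : ∀ v ∈ Ioo A T, ∫ w in Ioo A T, ‖Function.uncurry (rlCompKernel β γ T) (v, w)‖
        = (T - v) ^ (β - 1) • ((v - A) ^ γ / γ) := by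
      intro v hv
      have h := setIntegral_rlCompKernel_smul_left (β := β) (γ := γ) (A := A) hv.2.le
        (fun _ => (1 : ℝ))
      simp only [smul_eq_mul, mul_one] at h
      simp only [Function.uncurry_apply_pair,
        fun w => norm_of_nonneg (rlCompKernel_nonneg (β := β) (γ := γ) hv.2.le w), h,
        integral_sub_rpow (by linarith : -1 < γ - 1) hv.1.le, sub_add_cancel, smul_eq_mul]
    have hcont : ContinuousOn (fun v => (v - A) ^ γ / γ) (Icc A T) :=
      ((continuous_id.sub continuous_const).rpow_const fun _ => .inr hγ.le).continuousOn.div_const _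
    exact (integrableOn_sub_rpow_smul (by linarith) hcont).congr
      ((ae_restrict_iff' measurableSet_Ioo).2 (.of_forall fun v hv => (hsec v hv).symm))

theorem integrable_rlCompKernel_smul {β γ A T : ℝ} (hβ : 0 < β) (hγ : 0 < γ) {f : ℝ → E}
    (hf : ContinuousOn f (Icc A T)) :
    Integrable (Function.uncurry fun v w => rlCompKernel β γ T v w • f w)
      ((volume.restrict (Ioo A T)).prod (volume.restrict (Ioo A T))) := by
  obtain ⟨C, hC⟩ := isCompact_Icc.exists_bound_of_continuousOn hf
  have hfm : AEStronglyMeasurable f (volume.restrict (Ioo A T)) :=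
    (hf.mono Ioo_subset_Icc_self).aestronglyMeasurable measurableSet_Ioo
  exact (integrable_rlCompKernel hβ hγ).smul_bdd C hfm.comp_snd
    (Measure.quasiMeasurePreserving_snd.ae ((ae_restrict_iff' measurableSet_Ioo).2
      (.of_forall fun w hw => hC w (Ioo_subset_Icc_self hw))))

theorem integrableOn_sub_rpow_smul_rlIntegral {β γ A T : ℝ} (hβ : 0 < β) (hγ : 0 < γ)
    {f : ℝ → E} (hf : ContinuousOn f (Icc A T)) :
    IntegrableOn (fun v => (T - v) ^ (β - 1) • rlIntegral γ A f v) (Ioo A T) := by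
  refine (((integrable_rlCompKernel_smul hβ hγ hf).integral_prod_left).smul (Gamma γ)⁻¹).congr
    ((ae_restrict_iff' measurableSet_Ioo).2 (.of_forall fun v hv => ?_))
  simp only [Function.uncurry_apply_pair, Pi.smul_apply,
    setIntegral_rlCompKernel_smul_left hv.2.le, rlIntegral]
  exact smul_comm _ _ _

theorem rlIntegral_rlIntegral [CompleteSpace E] {β γ A T : ℝ} (hβ : 0 < β) (hγ : 0 < γ) {f : ℝ → E}
    (hf : ContinuousOn f (Icc A T)) :
    rlIntegral β A (rlIntegral γ A f) T = rlIntegral (β + γ) A f T := by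
  have hleft : ∫ v in Ioo A T, (T - v) ^ (β - 1) • rlIntegral γ A f v
      = (Gamma γ)⁻¹ • ∫ v in Ioo A T, ∫ w in Ioo A T, rlCompKernel β γ T v w • f w := by
    rw [← integral_smul]
    refine setIntegral_congr_fun measurableSet_Ioo fun v hv => ?_
    rw [setIntegral_rlCompKernel_smul_left hv.2.le, rlIntegral, smul_comm]
  have hright : ∫ w in Ioo A T, ∫ v in Ioo A T, rlCompKernel β γ T v w • f w
      = (Gamma β * Gamma γ / Gamma (β + γ)) • ∫ w in Ioo A T, (T - w) ^ (β + γ - 1) • f w := by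
    rw [← integral_smul]
    refine setIntegral_congr_fun measurableSet_Ioo fun w hw => ?_
    simp only [setIntegral_rlCompKernel_smul_right hβ hγ hw, mul_smul]
  have hΓ : ∀ {x : ℝ}, 0 < x → Gamma x ≠ 0 := fun hx => (Gamma_pos_of_pos hx).ne'
  rw [rlIntegral, hleft, integral_integral_swap (integrable_rlCompKernel_smul hβ hγ hf), hright,
    smul_smul, smul_smul, rlIntegral]
  congr 1
  field_simp [hΓ hβ, hΓ hγ, hΓ (add_pos hβ hγ)]

theorem setIntegral_comp_rpow_Ioo {ρ a t : ℝ} (hρ : 0 < ρ) (ha : 0 ≤ a) (ht : 0 ≤ t) (G : ℝ → E) :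
    ∫ s in Ioo a t, (ρ * s ^ (ρ - 1)) • G (s ^ ρ) = ∫ v in Ioo (a ^ ρ) (t ^ ρ), G v := by
  have hind : ∀ s ∈ Ioi (0 : ℝ), (ρ * s ^ (ρ - 1)) • (Ioo (a ^ ρ) (t ^ ρ)).indicator G (s ^ ρ)
      = (Ioo a t).indicator (fun s => (ρ * s ^ (ρ - 1)) • G (s ^ ρ)) s := by
    intro s hs
    have hmem : s ^ ρ ∈ Ioo (a ^ ρ) (t ^ ρ) ↔ s ∈ Ioo a t := by
      simp only [mem_Ioo, rpow_lt_rpow_iff ha hs.out.le hρ, rpow_lt_rpow_iff hs.out.le ht hρ]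
    by_cases h : s ∈ Ioo a t
    · rw [indicator_of_mem (hmem.2 h), indicator_of_mem h]
    · rw [indicator_of_notMem (mt hmem.1 h), indicator_of_notMem h, smul_zero]
  have h := integral_comp_rpow_Ioi_of_pos (g := (Ioo (a ^ ρ) (t ^ ρ)).indicator G) hρ
  rwa [setIntegral_congr_fun measurableSet_Ioi hind, setIntegral_indicator measurableSet_Ioo,
    setIntegral_indicator measurableSet_Ioo,
    inter_eq_right.2 (Ioo_subset_Ioi_self.trans (Ioi_subset_Ioi ha)),
    inter_eq_right.2 (Ioo_subset_Ioi_self.trans (Ioi_subset_Ioi (rpow_nonneg ha ρ)))] at h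

theorem katugampolaIntegralC_eq_rlIntegral {α ρ a t : ℝ} (hρ : 0 < ρ) (ha : 0 ≤ a) (hat : a ≤ t)
    {u G : ℝ → ℂ} (hu : ∀ s ∈ Ioo a t, u s = G (s ^ ρ)) :
    katugampolaIntegralC α ρ a u t = ((ρ ^ (-α) : ℝ) : ℂ) * rlIntegral α (a ^ ρ) G (t ^ ρ) := by
  rw [katugampolaIntegralC, rlIntegral, ← setIntegral_comp_rpow_Ioo hρ ha (ha.trans hat),
    intervalIntegral.integral_of_le hat, integral_Ioc_eq_integral_Ioo, Complex.real_smul,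
    ← integral_const_mul, ← integral_const_mul, ← integral_const_mul]
  refine setIntegral_congr_fun measurableSet_Ioo fun s hs => ?_
  have hx : 0 < t ^ ρ - s ^ ρ := sub_pos.2 (rpow_lt_rpow (ha.trans hs.1.le) hs.2 hρ)
  have hkernel : (t ^ ρ - s ^ ρ) ^ (α - 1) = ((t ^ ρ - s ^ ρ) ^ (1 - α))⁻¹ := by
    rw [← rpow_neg hx.le, neg_sub]
  have hconst : ρ ^ (1 - α) = ρ ^ (-α) * ρ := by rw [sub_eq_neg_add, rpow_add_one hρ.ne']
  simp only [Complex.real_smul, hu s hs, hkernel, hconst]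
  push_cast
  ring

end FractionalIntegrals

/-- The `n`-th successive approximation in the variable `T = t ^ ρ`, with `A = a ^ ρ`. -/
noncomputable def picardClosedForm (α A : ℝ) (μ c : ℂ) (g : ℝ → ℂ) (n : ℕ) (T : ℝ) : ℂ :=
  ∑ k ∈ Finset.range (n + 1), c * μ ^ k * (((T - A) ^ (k * α) / Gamma (k * α + 1) : ℝ) : ℂ)
    + ∑ k ∈ Finset.range n, μ ^ k * rlIntegral (α * k + α) A g T

theorem picardClosedForm_zero (α A : ℝ) (μ c : ℂ) (g : ℝ → ℂ) (T : ℝ) :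
    picardClosedForm α A μ c g 0 T = c := by
  simp [picardClosedForm]

theorem picardClosedForm_succ {α A T : ℝ} (hα : 0 < α) (hAT : A ≤ T) (μ c : ℂ) {g : ℝ → ℂ}
    (hg : ContinuousOn g (Icc A T)) (n : ℕ) :
    c + μ * rlIntegral α A (picardClosedForm α A μ c g n) T + rlIntegral α A g T
      = picardClosedForm α A μ c g (n + 1) T := by
  have hpow : ∀ k : ℕ, IntegrableOn (fun v => (T - v) ^ (α - 1) •
      (((v - A) ^ (k * α) / Gamma (k * α + 1) : ℝ) : ℂ)) (Ioo A T) := fun k =>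
    integrableOn_sub_rpow_smul (by linarith) (Complex.continuous_ofReal.comp
      (((continuous_id.sub continuous_const).rpow_const fun _ => .inr (by positivity)).div_const
        _)).continuousOn
  have hrl : ∀ k : ℕ, IntegrableOn (fun v => (T - v) ^ (α - 1) •
      rlIntegral (α * k + α) A g v) (Ioo A T) := fun k =>
    integrableOn_sub_rpow_smul_rlIntegral hα (by positivity) hg
  have hJpow : ∀ k : ℕ,
      rlIntegral α A (fun v => (((v - A) ^ (k * α) / Gamma (k * α + 1) : ℝ) : ℂ)) T
      = (((T - A) ^ ((k + 1 : ℕ) * α) / Gamma ((k + 1 : ℕ) * α + 1) : ℝ) : ℂ) := fun k => by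
    rw [rlIntegral_ofReal, rlIntegral_rpow_sub hα (by positivity) hAT]
    push_cast
    ring_nf
  have hJrl : ∀ k : ℕ, rlIntegral α A (rlIntegral (α * k + α) A g) T
      = rlIntegral (α * (k + 1 : ℕ) + α) A g T := fun k => by
    rw [rlIntegral_rlIntegral hα (by positivity) hg]
    push_cast
    ring_nf
  unfold picardClosedForm
  rw [rlIntegral_add
      (integrableOn_sub_rpow_smul_sum_mul _ _ fun k _ => hpow k)
      (integrableOn_sub_rpow_smul_sum_mul _ _ fun k _ => hrl k),
    rlIntegral_sum_mul _ _ fun k _ => hpow k, rlIntegral_sum_mul _ _ fun k _ => hrl k]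
  conv_rhs => rw [Finset.sum_range_succ' _ (n + 1),
    Finset.sum_range_succ' (fun k => μ ^ k * rlIntegral (α * k + α) A g T)]
  simp only [hJpow, hJrl]
  have hshift₁ : ∀ (k : ℕ) (x : ℂ), μ * (c * μ ^ k * x) = c * μ ^ (k + 1) * x := by
    intros; ring
  have hshift₂ : ∀ (k : ℕ) (x : ℂ), μ * (μ ^ k * x) = μ ^ (k + 1) * x := by
    intros; ring
  simp only [mul_add, Finset.mul_sum, hshift₁, hshift₂, pow_zero, Nat.cast_zero, zero_mul,
    mul_zero, zero_add, rpow_zero, Gamma_one, div_one, Complex.ofReal_one, mul_one]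
  ring

theorem eq_picardClosedForm {α ρ a : ℝ} (hα : 0 < α) (hρ : 0 < ρ) (ha : 0 ≤ a) {lam c : ℂ}
    {h g : ℝ → ℂ} (hg : ContinuousOn g (Ici (a ^ ρ))) (hgh : ∀ s ≥ a, h s = g (s ^ ρ))
    {u : ℕ → ℝ → ℂ} (hu0 : ∀ t, u 0 t = c)
    (hrec : ∀ n t, u (n + 1) t = c + lam * katugampolaIntegralC α ρ a (u n) t
      + katugampolaIntegralC α ρ a h t) (n : ℕ) {t : ℝ} (ht : a ≤ t) :
    u n t = picardClosedForm α (a ^ ρ) (lam * (ρ ^ (-α) : ℝ)) c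
      (fun v => (ρ ^ (-α) : ℝ) * g v) n (t ^ ρ) := by
  induction n generalizing t with
  | zero => rw [hu0, picardClosedForm_zero]
  | succ n ih =>
    have hg' : ContinuousOn (fun v => ((ρ ^ (-α) : ℝ) : ℂ) * g v) (Icc (a ^ ρ) (t ^ ρ)) :=
      (continuousOn_const.mul hg).mono Icc_subset_Ici_self
    rw [hrec, katugampolaIntegralC_eq_rlIntegral hρ ha ht fun s hs => ih hs.1.le,
      katugampolaIntegralC_eq_rlIntegral hρ ha ht fun s hs => hgh s hs.1.le,
      ← picardClosedForm_succ hα (rpow_le_rpow ha ht hρ.le) _ _ hg', rlIntegral_const_mul]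
    ring

theorem ofReal_div_rpow_natCast_mul {x ρ : ℝ} (hx : 0 ≤ x) (hρ : 0 < ρ) (α : ℝ) (k : ℕ) :
    (((x / ρ) ^ ((k : ℝ) * α) : ℝ) : ℂ)
      = ((ρ ^ (-α) : ℝ) : ℂ) ^ k * ((x ^ ((k : ℝ) * α) : ℝ) : ℂ) := by
  rw [← Complex.ofReal_pow, ← Complex.ofReal_mul, ← rpow_mul_natCast hρ.le, div_rpow hx hρ.le,
    neg_mul, rpow_neg hρ.le, mul_comm (k : ℝ) α, div_eq_inv_mul]

theorem integral_kernelSum_eq_sum_rlIntegral {α ρ a t : ℝ} (hα : 0 < α) (hρ : 0 < ρ) (ha : 0 ≤ a)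
    (hat : a ≤ t) (lam : ℂ) {h g : ℝ → ℂ} (hg : ContinuousOn g (Icc (a ^ ρ) (t ^ ρ)))
    (hgh : ∀ s ∈ Ioo a t, h s = g (s ^ ρ)) (n : ℕ) :
    ∫ s in a..t, ((((t ^ ρ - s ^ ρ) / ρ) ^ (α - 1) : ℝ) : ℂ)
        * ((s ^ (ρ - 1) : ℝ) : ℂ)
        * (∑ k ∈ Finset.range n,
            lam ^ k / (Gamma (α * k + α) : ℂ) * ((((t ^ ρ - s ^ ρ) / ρ) ^ (α * (k : ℝ)) : ℝ) : ℂ))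
        * h s
      = ∑ k ∈ Finset.range n, (lam * (ρ ^ (-α) : ℝ)) ^ k
          * rlIntegral (α * k + α) (a ^ ρ) (fun v => (ρ ^ (-α) : ℝ) * g v) (t ^ ρ) := by
  set T := t ^ ρ
  set Φ : ℝ → ℂ := fun v => ∑ k ∈ Finset.range n, (lam * (ρ ^ (-α) : ℝ)) ^ k
    * ((Gamma (α * k + α))⁻¹ • (T - v) ^ (α * k + α - 1) • ((ρ ^ (-α) : ℝ) * g v))
  have hpt : ∀ s ∈ Ioo a t, ((((T - s ^ ρ) / ρ) ^ (α - 1) : ℝ) : ℂ) * ((s ^ (ρ - 1) : ℝ) : ℂ)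
        * (∑ k ∈ Finset.range n,
            lam ^ k / (Gamma (α * k + α) : ℂ) * ((((T - s ^ ρ) / ρ) ^ (α * (k : ℝ)) : ℝ) : ℂ))
        * h s = (ρ * s ^ (ρ - 1)) • Φ (s ^ ρ) := by
    intro s hs
    have hx : 0 < T - s ^ ρ := sub_pos.2 (rpow_lt_rpow (ha.trans hs.1.le) hs.2 hρ)
    have hρpow : ∀ k : ℕ, ρ * (ρ ^ (-α)) ^ k * ρ ^ (-α) = (ρ ^ (α - 1 + α * k))⁻¹ := fun k => by
      rw [← rpow_mul_natCast hρ.le, ← rpow_neg hρ.le,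
        show -(α - 1 + α * k) = 1 + -α * k + -α by ring, rpow_add hρ, rpow_add hρ, rpow_one]
    rw [hgh s hs, Finset.mul_sum, Finset.sum_mul, Finset.smul_sum]
    refine Finset.sum_congr rfl fun k _ => ?_
    have hkernel : ((T - s ^ ρ) / ρ) ^ (α - 1) * ((T - s ^ ρ) / ρ) ^ (α * k)
        = ρ * (ρ ^ (-α)) ^ k * ρ ^ (-α) * (T - s ^ ρ) ^ (α * k + α - 1) := by
      rw [← rpow_add (div_pos hx hρ), div_rpow hx.le hρ.le, hρpow,
        show α * k + α - 1 = α - 1 + α * k by ring, div_eq_inv_mul]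
    have hkernelC := congrArg ((↑) : ℝ → ℂ) hkernel
    simp only [Complex.real_smul]
    push_cast at hkernelC ⊢
    linear_combination ((s ^ (ρ - 1) : ℝ) : ℂ) * lam ^ k / (Gamma (α * k + α) : ℂ)
      * g (s ^ ρ) * hkernelC
  have hint : ∀ k ∈ Finset.range n, IntegrableOn (fun v => (lam * (ρ ^ (-α) : ℝ)) ^ k
      * ((Gamma (α * k + α))⁻¹ • (T - v) ^ (α * k + α - 1) • ((ρ ^ (-α) : ℝ) * g v)))
      (Ioo (a ^ ρ) T) := fun k _ =>
    ((integrableOn_sub_rpow_smul (by nlinarith [(Nat.cast_nonneg k : (0 : ℝ) ≤ k)])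
      (continuousOn_const.mul hg)).fun_smul _).const_mul _
  rw [intervalIntegral.integral_of_le hat, integral_Ioc_eq_integral_Ioo,
    setIntegral_congr_fun measurableSet_Ioo hpt, setIntegral_comp_rpow_Ioo hρ ha (ha.trans hat),
    integral_finsetSum _ hint]
  simp only [integral_const_mul, integral_smul, rlIntegral]

theorem successive_approximations_formula_general (α ρ a : ℝ) (hα0 : 0 < α)
    (hρ : 0 < ρ) (ha : 0 < a) (lam c : ℂ) (h : ℝ → ℂ)
    (hh : ContinuousOn h (Set.Ici a)) (u : ℕ → ℝ → ℂ)
    (hu0 : ∀ t, u 0 t = c)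
    (hrec : ∀ n t, u (n + 1) t = c + lam * katugampolaIntegralC α ρ a (u n) t
      + katugampolaIntegralC α ρ a h t) :
    ∀ n : ℕ, 1 ≤ n → ∀ t ≥ a,
      u n t = c * (∑ k ∈ Finset.range (n + 1),
            lam ^ k / (Real.Gamma (k * α + 1) : ℂ)
              * ((((t ^ ρ - a ^ ρ) / ρ) ^ ((k : ℝ) * α) : ℝ) : ℂ))
        + ∫ s in a..t, ((((t ^ ρ - s ^ ρ) / ρ) ^ (α - 1) : ℝ) : ℂ)
            * ((s ^ (ρ - 1) : ℝ) : ℂ)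
            * (∑ k ∈ Finset.range n,
                lam ^ k / (Real.Gamma (α * k + α) : ℂ)
                  * ((((t ^ ρ - s ^ ρ) / ρ) ^ (α * (k : ℝ)) : ℝ) : ℂ))
            * h s := by
  intro n _ t ht
  set g : ℝ → ℂ := fun v => h (v ^ ρ⁻¹)
  have hg : ContinuousOn g (Ici (a ^ ρ)) :=
    hh.comp (continuous_rpow_const (inv_nonneg.2 hρ.le)).continuousOn fun v hv => by
      simpa [rpow_rpow_inv ha.le hρ.ne'] using
        rpow_le_rpow (rpow_nonneg ha.le ρ) (mem_Ici.1 hv) (inv_nonneg.2 hρ.le)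
  have hgh : ∀ s ≥ a, h s = g (s ^ ρ) := fun s hs => by
    simp only [g, rpow_rpow_inv (ha.le.trans hs) hρ.ne']
  have hAT : a ^ ρ ≤ t ^ ρ := rpow_le_rpow ha.le ht hρ.le
  rw [eq_picardClosedForm hα0 hρ ha.le hg hgh hu0 hrec n ht, picardClosedForm,
    integral_kernelSum_eq_sum_rlIntegral hα0 hρ ha.le ht lam (hg.mono Icc_subset_Ici_self)
      (fun s hs => hgh s hs.1.le), Finset.mul_sum]
  congr 1
  refine Finset.sum_congr rfl fun k _ => ?_
  rw [ofReal_div_rpow_natCast_mul (sub_nonneg.2 hAT) hρ]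
  push_cast
  ring

/-- Closed form of the successive approximations
`u₀ = c`, `u_{n+1} = c + λ I_{a+}^{α,ρ} u_n + I_{a+}^{α,ρ} h`. -/
theorem successive_approximations_formula (α ρ a : ℝ) (hα0 : 0 < α) (hα1 : α < 1)
    (hρ : 0 < ρ) (ha : 0 < a) (lam c : ℂ) (h : ℝ → ℂ)
    (hh : ContinuousOn h (Set.Ici a)) (u : ℕ → ℝ → ℂ)
    (hu0 : ∀ t, u 0 t = c)
    (hrec : ∀ n t, u (n + 1) t = c + lam * katugampolaIntegralC α ρ a (u n) t
      + katugampolaIntegralC α ρ a h t) :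
    ∀ n : ℕ, 1 ≤ n → ∀ t ≥ a,
      u n t = c * (∑ k ∈ Finset.range (n + 1),
            lam ^ k / (Real.Gamma (k * α + 1) : ℂ)
              * ((((t ^ ρ - a ^ ρ) / ρ) ^ ((k : ℝ) * α) : ℝ) : ℂ))
        + ∫ s in a..t, ((((t ^ ρ - s ^ ρ) / ρ) ^ (α - 1) : ℝ) : ℂ)
            * ((s ^ (ρ - 1) : ℝ) : ℂ)
            * (∑ k ∈ Finset.range n,
                lam ^ k / (Real.Gamma (α * k + α) : ℂ)
                  * ((((t ^ ρ - s ^ ρ) / ρ) ^ (α * (k : ℝ)) : ℝ) : ℂ))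
            * h s :=
  successive_approximations_formula_general α ρ a hα0 hρ ha lam c h hh u hu0 hrec
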